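/- arXiv:2204.00100 — 3 statements merged into one kernel-verified Lean document; each statement's English description precedes it below -/
import Mathlib

section
/- Let H be a real Hilbert space, T : H → H quasinonexpansive with fixed point y*, (γₖ) ⊆ [0,1] with ∑ₖ γₖ(1 − γₖ) = ∞, and y_{k+1} = y_k + γₖ(T(y_k) − y_k). Then liminf_{k→∞} ‖T(y_k) − y_k‖ = 0. -/
open Filter Topology

theorem stmt_1
    {H : Type*} [NormedAddCommGroup H] [InnerProductSpace ℝ H] [CompleteSpace H]
    (T : H → H)
    (hT : ∀ x y, T y = y → ‖T x - y‖ ≤ ‖x - y‖)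
    (ystar : H) (hfix : T ystar = ystar)
    (γ : ℕ → ℝ) (hγ : ∀ k, γ k ∈ Set.Icc (0 : ℝ) 1)
    (hdiv : ¬ Summable (fun k => γ k * (1 - γ k)))
    (y : ℕ → H)
    (hrec : ∀ k, y (k + 1) = y k + γ k • (T (y k) - y k)) :
    Filter.liminf (fun k => ‖T (y k) - y k‖) Filter.atTop = 0 := by
  set r : ℕ → H := fun k => T (y k) - y k with hr
  set s : ℕ → ℝ := fun k => γ k * (1 - γ k) * ‖r k‖ ^ 2 with hs
  have hsnn : ∀ k, 0 ≤ s k := fun k => by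
    have h1 := (hγ k).1; have h2 := (hγ k).2
    have : (0:ℝ) ≤ ‖r k‖ ^ 2 := sq_nonneg _
    simp only [hs]
    exact mul_nonneg (mul_nonneg h1 (by linarith)) this
  -- key Fejér inequality
  have key : ∀ k, ‖y (k+1) - ystar‖ ^ 2 ≤ ‖y k - ystar‖ ^ 2 - s k := by
    intro k
    have h1 := (hγ k).1; have h2 := (hγ k).2
    have hq : ‖T (y k) - ystar‖ ≤ ‖y k - ystar‖ := hT (y k) ystar hfix
    have hq2 : ‖(y k - ystar) + r k‖ ^ 2 ≤ ‖y k - ystar‖ ^ 2 := by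
      have : (y k - ystar) + r k = T (y k) - ystar := by simp only [hr]; abel
      rw [this]
      exact pow_le_pow_left₀ (norm_nonneg _) hq 2
    have expand1 : ‖(y k - ystar) + r k‖ ^ 2
        = ‖y k - ystar‖ ^ 2 + 2 * inner ℝ (y k - ystar) (r k) + ‖r k‖ ^ 2 := by
      rw [@norm_add_sq_real]
    have hip : 2 * inner ℝ (y k - ystar) (r k) ≤ -‖r k‖ ^ 2 := by
      rw [expand1] at hq2; linarith
    have expand2 : ‖y (k+1) - ystar‖ ^ 2
        = ‖y k - ystar‖ ^ 2 + 2 * (γ k * inner ℝ (y k - ystar) (r k))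
          + γ k ^ 2 * ‖r k‖ ^ 2 := by
      have : y (k+1) - ystar = (y k - ystar) + γ k • r k := by
        rw [hrec k]; abel
      rw [this, @norm_add_sq_real, real_inner_smul_right, norm_smul]
      simp only [Real.norm_eq_abs, mul_pow, sq_abs]
      try ring
    rw [expand2]
    have hrnn : (0:ℝ) ≤ ‖r k‖ ^ 2 := sq_nonneg _
    simp only [hs]
    nlinarith [mul_le_mul_of_nonneg_left hip h1]
  -- partial sums bounded
  have psum : ∀ n, ∑ k ∈ Finset.range n, s k ≤ ‖y 0 - ystar‖ ^ 2 - ‖y n - ystar‖ ^ 2 := by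
    intro n
    induction n with
    | zero => simp
    | succ n ih =>
      rw [Finset.sum_range_succ]
      have := key n
      linarith
  have hsum : Summable s := by
    apply summable_of_sum_range_le (c := ‖y 0 - ystar‖ ^ 2) hsnn
    intro n
    have := psum n
    nlinarith [sq_nonneg ‖y n - ystar‖]
  -- Fejér monotonicity gives boundedness
  have hmono : ∀ n, ‖y n - ystar‖ ^ 2 ≤ ‖y 0 - ystar‖ ^ 2 := by
    intro n
    have := psum n
    have h2 : 0 ≤ ∑ k ∈ Finset.range n, s k := Finset.sum_nonneg fun k _ => hsnn k
    linarith
  have hbnd : ∀ k, ‖r k‖ ≤ 2 * ‖y 0 - ystar‖ := by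
    intro k
    have h0 : ‖y k - ystar‖ ≤ ‖y 0 - ystar‖ := by
      have := hmono k
      nlinarith [norm_nonneg (y k - ystar), norm_nonneg (y 0 - ystar)]
    have h1 : ‖T (y k) - ystar‖ ≤ ‖y k - ystar‖ := hT (y k) ystar hfix
    have h2 : r k = (T (y k) - ystar) - (y k - ystar) := by simp only [hr]; abel
    calc ‖r k‖ ≤ ‖T (y k) - ystar‖ + ‖y k - ystar‖ := by rw [h2]; exact norm_sub_le _ _
    _ ≤ 2 * ‖y 0 - ystar‖ := by linarith
  have hbdd : IsBoundedUnder (· ≤ ·) atTop (fun k => ‖r k‖) :=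
    ⟨2 * ‖y 0 - ystar‖, Filter.eventually_map.mpr (Filter.Eventually.of_forall hbnd)⟩
  have hbl : IsBoundedUnder (· ≥ ·) atTop (fun k => ‖r k‖) :=
    ⟨0, Filter.eventually_map.mpr (Filter.Eventually.of_forall fun k => norm_nonneg _)⟩
  have hcb : IsCoboundedUnder (· ≥ ·) atTop (fun k => ‖r k‖) :=
    hbdd.isCoboundedUnder_ge
  have hge : 0 ≤ liminf (fun k => ‖r k‖) atTop :=
    le_liminf_of_le hcb (Filter.Eventually.of_forall fun k => norm_nonneg _)
  rcases hge.lt_or_eq with hlt | heq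
  · exfalso
    set L := liminf (fun k => ‖r k‖) atTop with hL
    have hhalf : L / 2 < L := by linarith
    have hev : ∀ᶠ k in atTop, L / 2 < ‖r k‖ :=
      eventually_lt_of_lt_liminf hhalf hbl
    rw [Filter.eventually_atTop] at hev
    obtain ⟨N, hN⟩ := hev
    apply hdiv
    rw [← summable_nat_add_iff N]
    have hsT : Summable (fun k => (4 / L ^ 2) * s (k + N)) :=
      (((summable_nat_add_iff N).mpr hsum).mul_left _)
    apply Summable.of_nonneg_of_le _ _ hsT
    · intro k
      have h1 := (hγ (k+N)).1; have h2 := (hγ (k+N)).2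
      nlinarith
    · intro k
      have hk : L / 2 < ‖r (k + N)‖ := hN (k + N) (Nat.le_add_left _ _)
      have h1 := (hγ (k+N)).1; have h2 := (hγ (k+N)).2
      have hrge : (L/2)^2 ≤ ‖r (k+N)‖ ^ 2 := by
        apply pow_le_pow_left₀ (by linarith) (le_of_lt hk)
      have hγnn : 0 ≤ γ (k+N) * (1 - γ (k+N)) := by nlinarith
      have hL2 : (0:ℝ) < L ^ 2 := by positivity
      simp only [hs]
      rw [div_mul_eq_mul_div, le_div_iff₀ hL2]
      nlinarith [mul_le_mul_of_nonneg_left hrge hγnn]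
  · exact heq.symm
end

section
/- Let W ⊆ ℝⁿ be a nonempty closed convex set and F, F' : ℝⁿ → ℝⁿ maps of the form F(w) = ε(Mw − b), F'(w) = ε(Mw − b + (1/k)(ℓℓᵀ w − s ℓ)) where M is symmetric with M ⪰ D̲ I (D̲ > 0), ε > 0 satisfies ε‖ℓ‖² < 1 and ε λ_max(M + (1/k)ℓℓᵀ) < 1. If w ∈ W satisfies w = proj_W(w − F(w)) and w' ∈ W satisfies w' = proj_W(w' − F'(w')), then ‖w' − w‖ ≤ (ε/k)‖ℓℓᵀ w' − s ℓ‖ / (D̲ ε), i.e., ‖w' − w‖ ≤ ‖ℓℓᵀ w' − s ℓ‖ / (D̲ k). -/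
/-! Both fixed-point equations say that `w` and `w'` solve variational inequalities over `W`:
`⟪F w, u - w⟫ ≥ 0` and `⟪F' w', u - w'⟫ ≥ 0` for all `u ∈ W`. Testing each at the other solution and
adding gives `⟪F' w' - F w, w' - w⟫ ≤ 0`. Since `F' w' = F w' + (ε / k) r` with `r = ℓℓᵀ w' - s ℓ`
and `F` is strongly monotone with modulus `ε D̲`, this yields
`ε D̲ ‖w' - w‖² ≤ (ε / k) ‖r‖ ‖w' - w‖`. -/

open RealInnerProductSpace

section VariationalInequality

variable {E : Type*} [NormedAddCommGroup E] [InnerProductSpace ℝ E]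

theorem real_inner_sub_le_zero_of_forall_norm_sub_le {K : Set E} (hK : Convex ℝ K) {x v : E}
    (hv : v ∈ K) (hmin : ∀ u ∈ K, ‖x - v‖ ≤ ‖x - u‖) : ∀ u ∈ K, ⟪x - v, u - v⟫ ≤ 0 := by
  have : Nonempty K := ⟨⟨v, hv⟩⟩
  refine (norm_eq_iInf_iff_real_inner_le_zero hK hv).1 (le_antisymm ?_ ?_)
  · exact le_ciInf fun u => hmin u u.2
  · have hbdd : BddBelow (Set.range fun u : K => ‖x - u‖) :=
      ⟨0, by rintro _ ⟨u, rfl⟩; exact norm_nonneg _⟩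
    exact ciInf_le hbdd ⟨v, hv⟩

theorem mem_and_forall_inner_nonneg_of_eq_proj {K : Set E} (hK : Convex ℝ K) {proj : E → E}
    (hproj : ∀ x, proj x ∈ K ∧ ∀ u ∈ K, ‖x - proj x‖ ≤ ‖x - u‖) {v g : E}
    (hv : v = proj (v - g)) : v ∈ K ∧ ∀ u ∈ K, 0 ≤ ⟪g, u - v⟫ := by
  have hvK : v ∈ K := hv ▸ (hproj _).1
  refine ⟨hvK, fun u hu => ?_⟩
  have hmin : ∀ u ∈ K, ‖(v - g) - proj (v - g)‖ ≤ ‖(v - g) - u‖ := (hproj _).2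
  rw [← hv] at hmin
  have := real_inner_sub_le_zero_of_forall_norm_sub_le hK hvK hmin u hu
  rwa [sub_sub_cancel_left, inner_neg_left, neg_nonpos] at this

theorem norm_sub_le_of_strongly_monotone_vi {W : Set E} {F : E → E} {μ : ℝ} (hμ : 0 < μ)
    (hF : ∀ x y, μ * ‖x - y‖ ^ 2 ≤ ⟪F x - F y, x - y⟫) {w w' p : E} (hw : w ∈ W) (hw' : w' ∈ W)
    (hvi : ∀ u ∈ W, 0 ≤ ⟪F w, u - w⟫) (hvi' : ∀ u ∈ W, 0 ≤ ⟪F w' + p, u - w'⟫) :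
    ‖w' - w‖ ≤ ‖p‖ / μ := by
  set d := w' - w
  have hsum : μ * ‖d‖ ^ 2 ≤ ‖p‖ * ‖d‖ := by
    have h1 := hvi w' hw'
    have h2 := hvi' w hw
    have hneg : w - w' = -d := (neg_sub w' w).symm
    rw [hneg, inner_neg_right, inner_add_left] at h2
    have h3 := hF w' w
    rw [inner_sub_left] at h3
    have hCS : ⟪p, d⟫ ≥ -(‖p‖ * ‖d‖) := neg_le_of_abs_le (abs_real_inner_le_norm p d)
    linarith
  rw [le_div_iff₀ hμ]
  rcases (norm_nonneg d).eq_or_lt with hd | hd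
  · rw [← hd, zero_mul]
    exact norm_nonneg p
  · nlinarith

end VariationalInequality

theorem stmt_11_general {n : ℕ}
    (W : Set (EuclideanSpace ℝ (Fin n)))
    (hWconvex : Convex ℝ W)
    -- proj is the metric projection onto W
    (proj : EuclideanSpace ℝ (Fin n) → EuclideanSpace ℝ (Fin n))
    (hproj : ∀ x, proj x ∈ W ∧ ∀ u ∈ W, ‖x - proj x‖ ≤ ‖x - u‖)
    -- M symmetric with M ⪰ D̲ I
    (M : EuclideanSpace ℝ (Fin n) →ₗ[ℝ] EuclideanSpace ℝ (Fin n))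
    (Dlow : ℝ) (hDlow : 0 < Dlow)
    (hMlow : ∀ x, Dlow * ‖x‖ ^ 2 ≤ ⟪M x, x⟫)
    (b ℓ : EuclideanSpace ℝ (Fin n)) (s : ℝ)
    (k : ℕ) (hk : 0 < k) (ε : ℝ) (hε : 0 < ε)
    (F F' : EuclideanSpace ℝ (Fin n) → EuclideanSpace ℝ (Fin n))
    (hF : ∀ w, F w = ε • (M w - b))
    (hF' : ∀ w, F' w = ε • (M w - b + (1 / (k : ℝ)) • (⟪ℓ, w⟫ • ℓ - s • ℓ)))
    (w w' : EuclideanSpace ℝ (Fin n))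
    (hwfix : w = proj (w - F w)) (hw'fix : w' = proj (w' - F' w')) :
    ‖w' - w‖ ≤ ‖⟪ℓ, w'⟫ • ℓ - s • ℓ‖ / (Dlow * k) := by
  set r := ⟪ℓ, w'⟫ • ℓ - s • ℓ
  obtain ⟨hw, hvi⟩ := mem_and_forall_inner_nonneg_of_eq_proj hWconvex hproj hwfix
  obtain ⟨hw', hvi'⟩ := mem_and_forall_inner_nonneg_of_eq_proj hWconvex hproj hw'fix
  have hF'_eq : F' w' = F w' + (ε / k) • r := by
    rw [hF', hF, smul_add, smul_smul, mul_one_div]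
  have hFmono : ∀ x y, ε * Dlow * ‖x - y‖ ^ 2 ≤ ⟪F x - F y, x - y⟫ := fun x y => by
    rw [hF, hF, ← smul_sub, sub_sub_sub_cancel_right, ← map_sub, real_inner_smul_left, mul_assoc]
    exact mul_le_mul_of_nonneg_left (hMlow _) hε.le
  have hk' : (0 : ℝ) < k := Nat.cast_pos.2 hk
  calc ‖w' - w‖ ≤ ‖(ε / k) • r‖ / (ε * Dlow) :=
        norm_sub_le_of_strongly_monotone_vi (by positivity) hFmono hw hw' hvi (hF'_eq ▸ hvi')
    _ = ‖r‖ / (Dlow * k) := by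
      rw [norm_smul, Real.norm_of_nonneg (by positivity)]
      field_simp

theorem stmt_11 {n : ℕ}
    (W : Set (EuclideanSpace ℝ (Fin n)))
    (hW : W.Nonempty) (hWclosed : IsClosed W) (hWconvex : Convex ℝ W)
    -- proj is the metric projection onto W
    (proj : EuclideanSpace ℝ (Fin n) → EuclideanSpace ℝ (Fin n))
    (hproj : ∀ x, proj x ∈ W ∧ ∀ u ∈ W, ‖x - proj x‖ ≤ ‖x - u‖)
    -- M symmetric with M ⪰ D̲ I
    (M : EuclideanSpace ℝ (Fin n) →ₗ[ℝ] EuclideanSpace ℝ (Fin n))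
    (hMsymm : ∀ x y, ⟪M x, y⟫ = ⟪x, M y⟫)
    (Dlow : ℝ) (hDlow : 0 < Dlow)
    (hMlow : ∀ x, Dlow * ‖x‖ ^ 2 ≤ ⟪M x, x⟫)
    (b ℓ : EuclideanSpace ℝ (Fin n)) (s : ℝ)
    (k : ℕ) (hk : 0 < k) (ε : ℝ) (hε : 0 < ε)
    (hεℓ : ε * ‖ℓ‖ ^ 2 < 1)
    (hεmax : ∀ x, x ≠ 0 →
      ε * ⟪M x + (1 / (k : ℝ)) • (⟪ℓ, x⟫ • ℓ), x⟫ < ‖x‖ ^ 2)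
    (F F' : EuclideanSpace ℝ (Fin n) → EuclideanSpace ℝ (Fin n))
    (hF : ∀ w, F w = ε • (M w - b))
    (hF' : ∀ w, F' w = ε • (M w - b + (1 / (k : ℝ)) • (⟪ℓ, w⟫ • ℓ - s • ℓ)))
    (w w' : EuclideanSpace ℝ (Fin n))
    (hw : w ∈ W) (hw' : w' ∈ W)
    (hwfix : w = proj (w - F w)) (hw'fix : w' = proj (w' - F' w')) :
    ‖w' - w‖ ≤ ‖⟪ℓ, w'⟫ • ℓ - s • ℓ‖ / (Dlow * k) :=
  stmt_11_general W hWconvex proj hproj M Dlow hDlow hMlow b ℓ s k hk ε hε F F' hF hF' w w' hwfix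
    hw'fix
end

section
/- Let f : ℝⁿ → ℝ ∪ {+∞} be convex, g, g' : ℝⁿ → ℝ differentiable convex functions, X ⊆ ℝⁿ nonempty closed convex, τ > 0, and y₀ ∈ ℝⁿ. Let y = argmin_{x ∈ X} f(x) + g(x) + (1/(2τ))‖x − y₀‖² and y' = argmin_{x ∈ X} f(x) + g'(x) + (1/(2τ))‖x − y₀‖². Then ‖y − y'‖ ≤ τ ‖∇g(y) − ∇g'(y)‖. -/
open Set

private lemma key_lower {E : Type*} [NormedAddCommGroup E] [InnerProductSpace ℝ E]
    [CompleteSpace E]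
    {φ : E → ℝ} {v a d : E} {c k : ℝ}
    (hφ : HasGradientAt φ v a)
    (h : ∀ t : ℝ, t ∈ Set.Ioc (0:ℝ) 1 → φ a + t * c + t^2 * k ≤ φ (a + t • d)) :
    c ≤ inner ℝ v d := by
  have hline : HasDerivAt (fun t : ℝ => a + t • d) d 0 := by
    simpa using ((hasDerivAt_id (0:ℝ)).smul_const d).const_add a
  have hψ : HasDerivAt (fun t : ℝ => φ (a + t • d)) (inner ℝ v d) 0 := by
    have ha : a + (0:ℝ) • d = a := by simp
    have hφ' : HasFDerivAt φ ((InnerProductSpace.toDual ℝ E) v) (a + (0:ℝ) • d) := by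
      rw [ha]; exact hφ.hasFDerivAt
    have := hφ'.comp_hasDerivAt 0 hline
    simp [InnerProductSpace.toDual_apply_apply] at this
    exact this
  set F : ℝ → ℝ := fun t => φ (a + t • d) - φ a - t * c - t^2 * k with hF
  have hF0 : F 0 = 0 := by simp [hF]
  have hFd : HasDerivAt F (inner ℝ v d - c) 0 := by
    have h1 : HasDerivAt (fun t : ℝ => t * c) c 0 := by
      simpa using (hasDerivAt_id (0:ℝ)).mul_const c
    have h2 : HasDerivAt (fun t : ℝ => t^2 * k) 0 0 := by
      have := ((hasDerivAt_pow 2 (0:ℝ))).mul_const k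
      simpa using this
    have h3 := ((hψ.sub_const (φ a)).sub h1).sub h2
    rw [sub_zero] at h3
    exact h3
  have hFW : HasDerivWithinAt F (inner ℝ v d - c) (Ioi (0:ℝ)) 0 := hFd.hasDerivWithinAt
  rw [hasDerivWithinAt_iff_tendsto_slope] at hFW
  rw [show Ioi (0:ℝ) \ {0} = Ioi 0 from Set.diff_singleton_eq_self (by simp)] at hFW
  have hslope : ∀ᶠ t in nhdsWithin (0:ℝ) (Ioi 0), 0 ≤ slope F 0 t := by
    have hmem : Ioc (0:ℝ) 1 ∈ nhdsWithin (0:ℝ) (Ioi 0) := by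
      apply mem_nhdsWithin.mpr
      exact ⟨Iio 1, isOpen_Iio, by norm_num, fun t ht => ⟨ht.2, le_of_lt ht.1⟩⟩
    filter_upwards [hmem] with t ht
    have ht0 : 0 < t := ht.1
    have := h t ht
    have : 0 ≤ F t := by simp only [hF]; linarith
    rw [slope_def_field]
    simp only [sub_zero, hF0]
    exact div_nonneg this ht0.le
  have : 0 ≤ inner ℝ v d - c := ge_of_tendsto hFW hslope
  linarith

private lemma key_upper {E : Type*} [NormedAddCommGroup E] [InnerProductSpace ℝ E]
    [CompleteSpace E]
    {φ : E → ℝ} {v a d : E} {c : ℝ}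
    (hφ : HasGradientAt φ v a)
    (h : ∀ t : ℝ, t ∈ Set.Ioc (0:ℝ) 1 → φ (a + t • d) ≤ φ a + t * c) :
    (inner ℝ v d : ℝ) ≤ c := by
  have hneg : HasGradientAt (fun x => -φ x) (-v) a := by
    rw [hasGradientAt_iff_hasFDerivAt]
    rw [map_neg]; exact hφ.hasFDerivAt.neg
  have := key_lower (c := -c) (k := 0) (d := d) hneg
    (fun t ht => by have := h t ht; show -φ a + t * -c + t^2 * 0 ≤ -φ (a + t • d); linarith)
  have h2 : (inner ℝ (-v) d : ℝ) = -inner ℝ v d := by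
    rw [inner_neg_left]
  linarith [this, h2 ▸ this]

/-- Variational inequality for the proximal subproblem. -/
private lemma prox_vi {E : Type*} [NormedAddCommGroup E] [InnerProductSpace ℝ E]
    [CompleteSpace E]
    (f g : E → ℝ) (hf : ConvexOn ℝ Set.univ f)
    {v : E} {a : E} (hg : HasGradientAt g v a)
    (X : Set E) (hXconvex : Convex ℝ X) (τ : ℝ) (hτ : 0 < τ) (y₀ : E)
    (b : E) (haX : a ∈ X) (hbX : b ∈ X)
    (hmin : ∀ x ∈ X, f a + g a + (1/(2*τ)) * ‖a - y₀‖^2 ≤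
      f x + g x + (1/(2*τ)) * ‖x - y₀‖^2) :
    f a - f b - (1/τ) * inner ℝ (a - y₀) (b - a) ≤ inner ℝ v (b - a) := by
  apply key_lower (k := -(1/(2*τ)) * ‖b - a‖^2) hg
  intro t ht
  obtain ⟨ht0, ht1⟩ := ht
  have hxt : a + t • (b - a) = (1 - t) • a + t • b := by module
  have hxtX : a + t • (b - a) ∈ X := by
    rw [hxt]
    exact hXconvex haX hbX (by linarith) ht0.le (by ring)
  have hfxt : f (a + t • (b - a)) ≤ (1 - t) * f a + t * f b := by
    rw [hxt]
    exact hf.2 (mem_univ a) (mem_univ b) (by linarith) ht0.le (by ring)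
  have hnorm : ‖(a + t • (b - a)) - y₀‖^2 =
      ‖a - y₀‖^2 + 2 * t * inner ℝ (a - y₀) (b - a) + t^2 * ‖b - a‖^2 := by
    have : (a + t • (b - a)) - y₀ = (a - y₀) + t • (b - a) := by abel
    rw [this, norm_add_sq_real, real_inner_smul_right, norm_smul]
    simp [mul_pow, sq_abs]
    ring
  have hm := hmin _ hxtX
  rw [hnorm] at hm
  have h2τ : (0:ℝ) < 2 * τ := by linarith
  have hs : (1:ℝ)/(2*τ) * (2*t) = t/τ := by field_simp
  -- combine
  have : f a + g a ≤ (1 - t) * f a + t * f b + g (a + t • (b - a))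
      + (1/(2*τ)) * (2 * t * inner ℝ (a - y₀) (b - a) + t^2 * ‖b - a‖^2) := by
    nlinarith [hm, hfxt]
  have e : (1:ℝ)/(2*τ) * (2 * t * inner ℝ (a - y₀) (b - a) + t^2 * ‖b - a‖^2)
      = t * ((1/τ) * inner ℝ (a - y₀) (b - a)) + t^2 * ((1/(2*τ)) * ‖b - a‖^2) := by
    field_simp
  rw [e] at this
  linarith [this]

theorem stmt_14 {n : ℕ}
    (f g g' : EuclideanSpace ℝ (Fin n) → ℝ)
    (hf : ConvexOn ℝ Set.univ f)
    (hg : ConvexOn ℝ Set.univ g) (hg' : ConvexOn ℝ Set.univ g')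
    (gradg gradg' : EuclideanSpace ℝ (Fin n) → EuclideanSpace ℝ (Fin n))
    (hgdiff : ∀ x, HasGradientAt g (gradg x) x)
    (hg'diff : ∀ x, HasGradientAt g' (gradg' x) x)
    (X : Set (EuclideanSpace ℝ (Fin n)))
    (hX : X.Nonempty) (hXclosed : IsClosed X) (hXconvex : Convex ℝ X)
    (τ : ℝ) (hτ : 0 < τ) (y₀ y y' : EuclideanSpace ℝ (Fin n))
    (hy : y ∈ X ∧ ∀ x ∈ X,
      f y + g y + (1 / (2 * τ)) * ‖y - y₀‖ ^ 2 ≤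
        f x + g x + (1 / (2 * τ)) * ‖x - y₀‖ ^ 2)
    (hy' : y' ∈ X ∧ ∀ x ∈ X,
      f y' + g' y' + (1 / (2 * τ)) * ‖y' - y₀‖ ^ 2 ≤
        f x + g' x + (1 / (2 * τ)) * ‖x - y₀‖ ^ 2) :
    ‖y - y'‖ ≤ τ * ‖gradg y - gradg' y‖ := by
  obtain ⟨hyX, hymin⟩ := hy
  obtain ⟨hy'X, hy'min⟩ := hy'
  set d := y' - y with hd
  -- Step A : VI for y
  have hA := prox_vi f g hf (hgdiff y) X hXconvex τ hτ y₀ y' hyX hy'X hymin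
  -- Step B : VI for y'
  have hB := prox_vi f g' hf (hg'diff y') X hXconvex τ hτ y₀ y hy'X hyX hy'min
  -- Step C : monotonicity of gradg'
  have hC1 : (inner ℝ (gradg' y') (y - y') : ℝ) ≤ g' y - g' y' := by
    apply key_upper (hg'diff y')
    intro t ht
    have hxt : y' + t • (y - y') = (1 - t) • y' + t • y := by module
    rw [hxt]
    have hcvx : g' ((1-t) • y' + t • y) ≤ (1-t) * g' y' + t * g' y :=
      hg'.2 (mem_univ y') (mem_univ y) (by linarith [ht.2]) ht.1.le (by ring)
    calc g' ((1-t) • y' + t • y) ≤ (1-t) * g' y' + t * g' y := hcvx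
      _ = g' y' + t * (g' y - g' y') := by ring
  have hC2 : (inner ℝ (gradg' y) (y' - y) : ℝ) ≤ g' y' - g' y := by
    apply key_upper (hg'diff y)
    intro t ht
    have hxt : y + t • (y' - y) = (1 - t) • y + t • y' := by module
    rw [hxt]
    have hcvx : g' ((1-t) • y + t • y') ≤ (1-t) * g' y + t * g' y' :=
      hg'.2 (mem_univ y) (mem_univ y') (by linarith [ht.2]) ht.1.le (by ring)
    calc g' ((1-t) • y + t • y') ≤ (1-t) * g' y + t * g' y' := hcvx
      _ = g' y + t * (g' y' - g' y) := by ring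
  -- inner ℝ product algebra
  have e1 : (inner ℝ (y' - y₀) (y - y') : ℝ) = -inner ℝ (y' - y₀) (y' - y) := by
    rw [← inner_neg_right]; congr 1; abel
  have e2 : (inner ℝ (gradg' y') (y - y') : ℝ) = -inner ℝ (gradg' y') (y' - y) := by
    rw [← inner_neg_right]; congr 1; abel
  have e3 : (inner ℝ (y - y₀) (y' - y) : ℝ) - inner ℝ (y' - y₀) (y' - y) = -‖y' - y‖^2 := by
    rw [← inner_sub_left]
    have : y - y₀ - (y' - y₀) = -(y' - y) := by abel
    rw [this, inner_neg_left, real_inner_self_eq_norm_sq]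
  -- combine A + B:
  -- (1/τ)‖d‖² ≤ inner ℝ (gradg y - gradg' y') d
  have hcomb : (1/τ) * ‖y' - y‖^2 ≤
      (inner ℝ (gradg y) (y' - y) : ℝ) - inner ℝ (gradg' y') (y' - y) := by
    rw [e1] at hB
    rw [e2] at hB
    have e3' : (1/τ) * ((inner ℝ (y - y₀) (y' - y) : ℝ) - inner ℝ (y' - y₀) (y' - y))
        = -((1/τ) * ‖y' - y‖^2) := by rw [e3]; ring
    linarith [hA, hB, e3']
  -- use monotonicity: inner ℝ (gradg' y) d ≤ inner ℝ (gradg' y') d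
  have hmono : (inner ℝ (gradg' y) (y' - y) : ℝ) ≤ inner ℝ (gradg' y') (y' - y) := by
    rw [e2] at hC1
    linarith [hC1, hC2]
  have hmain : (1/τ) * ‖y' - y‖^2 ≤ (inner ℝ (gradg y - gradg' y) (y' - y) : ℝ) := by
    rw [inner_sub_left]
    linarith [hcomb, hmono]
  have hCS : (inner ℝ (gradg y - gradg' y) (y' - y) : ℝ) ≤
      ‖gradg y - gradg' y‖ * ‖y' - y‖ := real_inner_le_norm _ _
  have hnorm_eq : ‖y - y'‖ = ‖y' - y‖ := norm_sub_rev _ _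
  rw [hnorm_eq]
  rcases eq_or_lt_of_le (norm_nonneg (y' - y)) with h0 | h0
  · rw [← h0]; positivity
  · have h1 : (1/τ) * ‖y' - y‖^2 ≤ ‖gradg y - gradg' y‖ * ‖y' - y‖ := le_trans hmain hCS
    have h2 : ‖y' - y‖ ≤ τ * ‖gradg y - gradg' y‖ := by
      rw [div_mul_eq_mul_div, div_le_iff₀ hτ] at h1
      · nlinarith [h1, h0]
    exact h2
end
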